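/- arXiv:1103.3680 — 2 statements merged into one kernel-verified Lean document; each statement's English description precedes it below -/
import Mathlib

section
/- Under the hypotheses of the weakly contractive fixed point theorem in ordered complete partial metric spaces, if additionally for any two points x, y ∈ X there exists z ∈ X comparable with both x and y, then the fixed point of f is unique. -/
/-!
The Picard orbit `fⁿ x₀` is monotone, so the contraction applies along it: successive distances
lose at least `ψ` of themselves at each step and tend to `0`, and the orbit is Cauchy with
limit `0`. Completeness gives `u` with `p u u = 0` and `p (fⁿ x₀) u → 0`; either continuity of `f`
or `fⁿ x₀ ≤ u` then gives `p (fⁿ⁺¹ x₀) (f u) → 0`, so `f u = u`. For two fixed points `u`, `v`,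
the orbit of a point comparable with both converges to each of them, so `p u v = 0`.
-/

noncomputable section
open Filter Topology

def IsPartialMetric {X : Type*} (p : X → X → ℝ) : Prop :=
  (∀ x y, 0 ≤ p x y) ∧
  (∀ x y, x = y ↔ (p x x = p x y ∧ p x y = p y y)) ∧
  (∀ x y, p x x ≤ p x y) ∧
  (∀ x y, p x y = p y x) ∧
  (∀ x y z, p x y ≤ p x z + p z y - p z z)

/-- `u` converges to `x` in the partial metric space `(X, p)`. -/
def PConvergesTo {X : Type*} (p : X → X → ℝ) (u : ℕ → X) (x : X) : Prop :=
  Tendsto (fun n => p (u n) x) atTop (𝓝 (p x x))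

/-- `u` converges properly to `x` in `(X, p)`. -/
def PProperConvergesTo {X : Type*} (p : X → X → ℝ) (u : ℕ → X) (x : X) : Prop :=
  Tendsto (fun n => p (u n) x) atTop (𝓝 (p x x)) ∧
  Tendsto (fun n => p (u n) (u n)) atTop (𝓝 (p x x))

/-- `u` is a Cauchy sequence in `(X, p)`: `lim_{n,m} p (u n) (u m)` exists (finite). -/
def PCauchy {X : Type*} (p : X → X → ℝ) (u : ℕ → X) : Prop :=
  ∃ l : ℝ, Tendsto (fun nm : ℕ × ℕ => p (u nm.1) (u nm.2)) atTop (𝓝 l)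

/-- `(X, p)` is a complete partial metric space. -/
def PComplete {X : Type*} (p : X → X → ℝ) : Prop :=
  ∀ u : ℕ → X, ∀ l : ℝ,
    Tendsto (fun nm : ℕ × ℕ => p (u nm.1) (u nm.2)) atTop (𝓝 l) →
    ∃ x, p x x = l ∧ Tendsto (fun n => p (u n) x) atTop (𝓝 l)

/-- `f` is continuous on `(X, p)` (w.r.t. both `p` and the induced metric `pˢ`). -/
def PContinuousMap {X : Type*} (p : X → X → ℝ) (f : X → X) : Prop :=
  ∀ (u : ℕ → X) (x : X),
    (PConvergesTo p u x → PConvergesTo p (fun n => f (u n)) (f x)) ∧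
    (PProperConvergesTo p u x → PProperConvergesTo p (fun n => f (u n)) (f x))

namespace IsPartialMetric

variable {X : Type*} {p : X → X → ℝ}

lemma nonneg (hp : IsPartialMetric p) (x y : X) : 0 ≤ p x y := hp.1 x y

lemma comm (hp : IsPartialMetric p) (x y : X) : p x y = p y x := hp.2.2.2.1 x y

lemma le_add (hp : IsPartialMetric p) (x y z : X) : p x y ≤ p z x + p z y := by
  linarith [hp.2.2.2.2 x y z, hp.comm x z, hp.nonneg z z]

lemma eq_of_eq_zero (hp : IsPartialMetric p) {x y : X} (h : p x y = 0) : x = y := by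
  have hxx : p x x = 0 := le_antisymm (h ▸ hp.2.2.1 x y) (hp.nonneg x x)
  have hyy : p y y = 0 := le_antisymm (h ▸ hp.comm x y ▸ hp.2.2.1 y x) (hp.nonneg y y)
  exact (hp.2.1 x y).2 ⟨by rw [hxx, h], by rw [h, hyy]⟩

lemma eq_of_tendsto_zero (hp : IsPartialMetric p) {w : ℕ → X} {x y : X}
    (hx : Tendsto (fun n => p (w n) x) atTop (𝓝 0))
    (hy : Tendsto (fun n => p (w n) y) atTop (𝓝 0)) : x = y := by
  refine hp.eq_of_eq_zero (le_antisymm ?_ (hp.nonneg x y))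
  simpa using le_of_tendsto_of_tendsto' tendsto_const_nhds (hx.add hy) fun n => hp.le_add x y (w n)

end IsPartialMetric

lemma tendsto_zero_of_le_sub {ψ : ℝ → ℝ} (hψm : MonotoneOn ψ (Set.Ici 0))
    (hψpos : ∀ t : ℝ, 0 < t → 0 < ψ t) (hψ : ∀ t, 0 ≤ t → 0 ≤ ψ t) {a : ℕ → ℝ}
    (ha : ∀ n, 0 ≤ a n) (hstep : ∀ n, a (n + 1) ≤ a n - ψ (a n)) :
    Tendsto a atTop (𝓝 0) := by
  have hanti : Antitone a := antitone_nat_of_succ_le fun n => by linarith [hstep n, hψ _ (ha n)]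
  have hbdd : BddBelow (Set.range a) := ⟨0, by rintro _ ⟨n, rfl⟩; exact ha n⟩
  have hlim := tendsto_atTop_ciInf hanti hbdd
  set L := ⨅ n, a n
  have hL : 0 ≤ L := le_ciInf ha
  suffices ¬ 0 < L by rwa [← hL.antisymm (not_lt.1 this)] at hlim
  intro hLpos
  have hle : ∀ n, a (n + 1) ≤ a n - ψ L := fun n =>
    (hstep n).trans (by gcongr; exact hψm hL (ha n) (ciInf_le hbdd n))
  have := le_of_tendsto_of_tendsto' (hlim.comp (tendsto_add_atTop_nat 1)) (hlim.sub_const _) hle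
  linarith [hψpos L hLpos]

section WeakContraction

variable {X : Type*} [PartialOrder X] {p : X → X → ℝ} {f : X → X} {ψ : ℝ → ℝ}

lemma dist_map_le (hp : IsPartialMetric p) (hψ : ∀ t, 0 ≤ t → 0 ≤ ψ t)
    (hcontr : ∀ x y : X, y ≤ x → p (f x) (f y) ≤ p x y - ψ (p x y)) {x y : X} (hyx : y ≤ x) :
    p (f x) (f y) ≤ p x y := by
  linarith [hcontr x y hyx, hψ _ (hp.nonneg x y)]

lemma tendsto_dist_iterate (hp : IsPartialMetric p) (hf : Monotone f)
    (hψm : MonotoneOn ψ (Set.Ici 0)) (hψpos : ∀ t : ℝ, 0 < t → 0 < ψ t)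
    (hψ : ∀ t, 0 ≤ t → 0 ≤ ψ t)
    (hcontr : ∀ x y : X, y ≤ x → p (f x) (f y) ≤ p x y - ψ (p x y)) {x y : X} (hyx : y ≤ x) :
    Tendsto (fun n => p (f^[n] x) (f^[n] y)) atTop (𝓝 0) := by
  refine tendsto_zero_of_le_sub hψm hψpos hψ (fun n => hp.nonneg _ _) fun n => ?_
  simp only [Function.iterate_succ_apply']
  exact hcontr _ _ (hf.iterate n hyx)

lemma exists_dist_iterate_le (hp : IsPartialMetric p) (hf : Monotone f)
    (hψm : MonotoneOn ψ (Set.Ici 0)) (hψpos : ∀ t : ℝ, 0 < t → 0 < ψ t)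
    (hψ : ∀ t, 0 ≤ t → 0 ≤ ψ t)
    (hcontr : ∀ x y : X, y ≤ x → p (f x) (f y) ≤ p x y - ψ (p x y)) {x₀ : X} (hx₀ : x₀ ≤ f x₀)
    {ε : ℝ} (hε : 0 < ε) :
    ∃ N, ∀ n m, N ≤ n → n ≤ m → p (f^[n] x₀) (f^[m] x₀) ≤ ε := by
  set x : ℕ → X := fun n => f^[n] x₀
  have hx : ∀ n, x (n + 1) = f (x n) := fun n => Function.iterate_succ_apply' f n x₀
  -- `δ` is small enough both to absorb one step and to be beaten by `ψ` above `ε / 2`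
  set δ := min (ε / 2) (ψ (ε / 2))
  have hδ : 0 < δ := lt_min (half_pos hε) (hψpos _ (half_pos hε))
  have hsucc : Tendsto (fun n => p (x (n + 1)) (x n)) atTop (𝓝 0) := by
    simpa only [x, ← Function.iterate_succ_apply] using
      tendsto_dist_iterate hp hf hψm hψpos hψ hcontr hx₀
  obtain ⟨N, hN⟩ := eventually_atTop.1 (hsucc.eventually (gt_mem_nhds hδ))
  refine ⟨N, fun n m hn hnm => ?_⟩
  induction m, hnm using Nat.le_induction with
  | base => linarith [hp.le_add (x n) (x n) (x (n + 1)), hN n hn, min_le_left (ε / 2) (ψ (ε / 2))]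
  | succ m hnm ih =>
    set t := p (x n) (x m)
    have htri := hp.le_add (x n) (x (m + 1)) (x (n + 1))
    have hstep : p (x (n + 1)) (x (m + 1)) ≤ t - ψ t := by
      rw [hp.comm, hx, hx, show t = p (x m) (x n) from hp.comm _ _]
      exact hcontr _ _ ((hf.monotone_iterate_of_le_map hx₀) hnm)
    rcases le_or_gt t (ε / 2) with ht | ht
    · linarith [hN n hn, min_le_left (ε / 2) (ψ (ε / 2)), hψ t (hp.nonneg _ _)]
    · have hψt : ψ (ε / 2) ≤ ψ t := hψm (half_pos hε).le (hp.nonneg _ _) ht.le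
      linarith [hN n hn, min_le_right (ε / 2) (ψ (ε / 2))]

lemma tendsto_dist_iterate_prod (hp : IsPartialMetric p) (hf : Monotone f)
    (hψm : MonotoneOn ψ (Set.Ici 0)) (hψpos : ∀ t : ℝ, 0 < t → 0 < ψ t)
    (hψ : ∀ t, 0 ≤ t → 0 ≤ ψ t)
    (hcontr : ∀ x y : X, y ≤ x → p (f x) (f y) ≤ p x y - ψ (p x y)) {x₀ : X} (hx₀ : x₀ ≤ f x₀) :
    Tendsto (fun nm : ℕ × ℕ => p (f^[nm.1] x₀) (f^[nm.2] x₀)) atTop (𝓝 0) := by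
  refine Metric.tendsto_atTop.2 fun ε hε => ?_
  obtain ⟨N, hN⟩ := exists_dist_iterate_le hp hf hψm hψpos hψ hcontr hx₀ (half_pos hε)
  refine ⟨(N, N), fun ⟨n, m⟩ ⟨hn, hm⟩ => ?_⟩
  have hle : p (f^[n] x₀) (f^[m] x₀) ≤ ε / 2 := by
    rcases le_total n m with h | h
    · exact hN n m hn h
    · rw [hp.comm]; exact hN m n hm h
  rw [Real.dist_eq, sub_zero, abs_of_nonneg (hp.nonneg _ _)]
  linarith

lemma tendsto_dist_iterate_map_of_continuous (hp : IsPartialMetric p) (hψ : ∀ t, 0 ≤ t → 0 ≤ ψ t)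
    (hcontr : ∀ x y : X, y ≤ x → p (f x) (f y) ≤ p x y - ψ (p x y)) (hcont : PContinuousMap p f)
    {x₀ u : X} (huu : p u u = 0) (hconv : PConvergesTo p (fun n => f^[n] x₀) u) :
    Tendsto (fun n => p (f^[n + 1] x₀) (f u)) atTop (𝓝 0) := by
  have hfu : p (f u) (f u) = 0 :=
    le_antisymm (huu ▸ dist_map_le hp hψ hcontr le_rfl) (hp.nonneg _ _)
  simpa only [PConvergesTo, hfu, ← Function.iterate_succ_apply'] using (hcont _ u).1 hconv

lemma tendsto_dist_iterate_map_of_le (hp : IsPartialMetric p) (hψ : ∀ t, 0 ≤ t → 0 ≤ ψ t)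
    (hcontr : ∀ x y : X, y ≤ x → p (f x) (f y) ≤ p x y - ψ (p x y)) {x₀ u : X}
    (hle : ∀ n, f^[n] x₀ ≤ u) (hconv : Tendsto (fun n => p (f^[n] x₀) u) atTop (𝓝 0)) :
    Tendsto (fun n => p (f^[n + 1] x₀) (f u)) atTop (𝓝 0) := by
  refine squeeze_zero (fun n => hp.nonneg _ _) (fun n => ?_) hconv
  rw [Function.iterate_succ_apply', hp.comm, hp.comm _ u]
  exact dist_map_le hp hψ hcontr (hle n)

lemma exists_fixedPt (hp : IsPartialMetric p) (hcomp : PComplete p) (hf : Monotone f)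
    (hψm : MonotoneOn ψ (Set.Ici 0)) (hψpos : ∀ t : ℝ, 0 < t → 0 < ψ t)
    (hψ : ∀ t, 0 ≤ t → 0 ≤ ψ t)
    (hcontr : ∀ x y : X, y ≤ x → p (f x) (f y) ≤ p x y - ψ (p x y)) {x₀ : X} (hx₀ : x₀ ≤ f x₀)
    (hcont : PContinuousMap p f ∨
      ∀ (u : ℕ → X) (x : X), Monotone u → PConvergesTo p u x → ∀ n, u n ≤ x) :
    ∃ u, f u = u := by
  obtain ⟨u, huu, hu⟩ := hcomp (fun n => f^[n] x₀) 0 (tendsto_dist_iterate_prod hp hf hψm hψpos hψ hcontr hx₀)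
  have hconv : PConvergesTo p (fun n => f^[n] x₀) u := by rwa [PConvergesTo, huu]
  have hfu : Tendsto (fun n => p (f^[n + 1] x₀) (f u)) atTop (𝓝 0) := by
    rcases hcont with hcont | hord
    · exact tendsto_dist_iterate_map_of_continuous hp hψ hcontr hcont huu hconv
    · exact tendsto_dist_iterate_map_of_le hp hψ hcontr
        (hord _ u (hf.monotone_iterate_of_le_map hx₀) hconv) hu
  exact ⟨u, (hp.eq_of_tendsto_zero (hu.comp (tendsto_add_atTop_nat 1)) hfu).symm⟩

lemma tendsto_dist_iterate_fixedPt (hp : IsPartialMetric p) (hf : Monotone f)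
    (hψm : MonotoneOn ψ (Set.Ici 0)) (hψpos : ∀ t : ℝ, 0 < t → 0 < ψ t)
    (hψ : ∀ t, 0 ≤ t → 0 ≤ ψ t)
    (hcontr : ∀ x y : X, y ≤ x → p (f x) (f y) ≤ p x y - ψ (p x y)) {u z : X} (hu : f u = u)
    (hzu : z ≤ u ∨ u ≤ z) :
    Tendsto (fun n => p (f^[n] z) u) atTop (𝓝 0) := by
  rcases hzu with h | h
  · simpa only [Function.iterate_fixed hu, hp.comm u] using
      tendsto_dist_iterate hp hf hψm hψpos hψ hcontr h
  · simpa only [Function.iterate_fixed hu] using tendsto_dist_iterate hp hf hψm hψpos hψ hcontr h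

end WeakContraction

theorem fixed_point_unique_general {X : Type*} [PartialOrder X] (p : X → X → ℝ)
    (hp : IsPartialMetric p) (hcomp : PComplete p)
    (f : X → X) (hf : Monotone f)
    (ψ : ℝ → ℝ) (hψm : MonotoneOn ψ (Set.Ici 0))
    (hψpos : ∀ t : ℝ, 0 < t → 0 < ψ t) (hψ0 : ψ 0 = 0)
    (hcontr : ∀ x y : X, y ≤ x → p (f x) (f y) ≤ p x y - ψ (p x y))
    (x₀ : X) (hx₀ : x₀ ≤ f x₀)
    (hcont : PContinuousMap p f ∨
      ∀ (u : ℕ → X) (x : X), Monotone u → PConvergesTo p u x → ∀ n, u n ≤ x)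
    (hdir : ∀ x y : X, ∃ z : X, (z ≤ x ∨ x ≤ z) ∧ (z ≤ y ∨ y ≤ z)) :
    ∃! u : X, f u = u := by
  have hψ : ∀ t, 0 ≤ t → 0 ≤ ψ t := fun t ht =>
    ht.eq_or_lt.elim (fun h => h ▸ hψ0.ge) fun h => (hψpos t h).le
  obtain ⟨u, hu⟩ := exists_fixedPt hp hcomp hf hψm hψpos hψ hcontr hx₀ hcont
  refine ⟨u, hu, fun v hv => ?_⟩
  obtain ⟨z, hzv, hzu⟩ := hdir v u
  exact hp.eq_of_tendsto_zero (tendsto_dist_iterate_fixedPt hp hf hψm hψpos hψ hcontr hv hzv)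
    (tendsto_dist_iterate_fixedPt hp hf hψm hψpos hψ hcontr hu hzu)

theorem fixed_point_unique {X : Type*} [PartialOrder X] (p : X → X → ℝ)
    (hp : IsPartialMetric p) (hcomp : PComplete p)
    (f : X → X) (hf : Monotone f)
    (ψ : ℝ → ℝ) (hψc : ContinuousOn ψ (Set.Ici 0)) (hψm : MonotoneOn ψ (Set.Ici 0))
    (hψpos : ∀ t : ℝ, 0 < t → 0 < ψ t) (hψ0 : ψ 0 = 0)
    (hψtop : Tendsto ψ atTop atTop)
    (hcontr : ∀ x y : X, y ≤ x → p (f x) (f y) ≤ p x y - ψ (p x y))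
    (x₀ : X) (hx₀ : x₀ ≤ f x₀)
    (hcont : PContinuousMap p f ∨
      ∀ (u : ℕ → X) (x : X), Monotone u → PConvergesTo p u x → ∀ n, u n ≤ x)
    (hdir : ∀ x y : X, ∃ z : X, (z ≤ x ∨ x ≤ z) ∧ (z ≤ y ∨ y ≤ z)) :
    ∃! u : X, f u = u :=
  fixed_point_unique_general p hp hcomp f hf ψ hψm hψpos hψ0 hcontr x₀ hx₀ hcont hdir
end
end

section
/- If u is a fixed point of f, w is comparable with u, and f is monotone non-decreasing and satisfies p(fx,fy) ≤ p(x,y) - ψ(p(x,y)) for comparable x,y with ψ continuous, non-decreasing, positive on (0,∞), ψ(0)=0, then lim_{n→∞} p(u, f^n w) = 0. -/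
noncomputable section
open Filter Topology

/- The hypotheses on `ψ` make `a` decrease to some `L ≥ 0`; monotonicity then gives
`ψ L ≤ ψ (a n) ≤ a n - a (n + 1) → 0`, so `ψ L ≤ 0`, which forces `L = 0`. -/
theorem tendsto_zero_of_succ_le_sub {ψ : ℝ → ℝ} {a : ℕ → ℝ} (ha : ∀ n, 0 ≤ a n)
    (hψm : MonotoneOn ψ (Set.Ici 0)) (hψpos : ∀ t : ℝ, 0 < t → 0 < ψ t) (hψ0 : ψ 0 = 0)
    (hstep : ∀ n, a (n + 1) ≤ a n - ψ (a n)) :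
    Tendsto a atTop (𝓝 0) := by
  have hψa : ∀ n, 0 ≤ ψ (a n) := fun n =>
    hψ0 ▸ hψm Set.self_mem_Ici (ha n) (ha n)
  have hanti : Antitone a := antitone_nat_of_succ_le fun n => by linarith [hstep n, hψa n]
  obtain ⟨L, hL⟩ : ∃ L, Tendsto a atTop (𝓝 L) :=
    ⟨_, tendsto_atTop_ciInf hanti ⟨0, by rintro _ ⟨n, rfl⟩; exact ha n⟩⟩
  have hL0 : 0 ≤ L := ge_of_tendsto' hL ha
  have hgap : Tendsto (fun n => a n - a (n + 1)) atTop (𝓝 0) := by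
    simpa using hL.sub (hL.comp (tendsto_add_atTop_nat 1))
  have hψL : ψ L ≤ 0 := ge_of_tendsto' hgap fun n =>
    calc ψ L ≤ ψ (a n) := hψm hL0 (ha n) (hanti.le_of_tendsto hL n)
      _ ≤ a n - a (n + 1) := by linarith [hstep n]
  obtain rfl : L = 0 := by
    by_contra hL
    exact (hψpos L (lt_of_le_of_ne hL0 (Ne.symm hL))).not_ge hψL
  exact hL

theorem Function.IsFixedPt.comparable_iterate {α : Type*} [Preorder α] {f : α → α}
    (hf : Monotone f) {u w : α} (hu : Function.IsFixedPt f u) (huw : u ≤ w ∨ w ≤ u) (n : ℕ) :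
    u ≤ f^[n] w ∨ f^[n] w ≤ u := by
  rw [← (hu.iterate n).eq]
  exact huw.imp (fun h => hf.iterate n h) (fun h => hf.iterate n h)

theorem iterates_approach_fixed_point_general {X : Type*} [PartialOrder X]
    (p : X → X → ℝ) (hp : IsPartialMetric p)
    (f : X → X) (hf : Monotone f)
    (ψ : ℝ → ℝ) (hψm : MonotoneOn ψ (Set.Ici 0))
    (hψpos : ∀ t : ℝ, 0 < t → 0 < ψ t) (hψ0 : ψ 0 = 0)
    (hcontr : ∀ x y : X, (y ≤ x ∨ x ≤ y) → p (f x) (f y) ≤ p x y - ψ (p x y))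
    (u : X) (hu : f u = u) (w : X) (huw : u ≤ w ∨ w ≤ u) :
    Tendsto (fun n => p u (f^[n] w)) atTop (𝓝 0) := by
  refine tendsto_zero_of_succ_le_sub (fun n => hp.1 _ _) hψm hψpos hψ0 fun n => ?_
  have h := hcontr u (f^[n] w) (Function.IsFixedPt.comparable_iterate hf hu huw n).symm
  rwa [hu, ← Function.iterate_succ_apply' f n w] at h

theorem iterates_approach_fixed_point {X : Type*} [PartialOrder X]
    (p : X → X → ℝ) (hp : IsPartialMetric p)
    (f : X → X) (hf : Monotone f)
    (ψ : ℝ → ℝ) (hψc : ContinuousOn ψ (Set.Ici 0)) (hψm : MonotoneOn ψ (Set.Ici 0))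
    (hψpos : ∀ t : ℝ, 0 < t → 0 < ψ t) (hψ0 : ψ 0 = 0)
    (hcontr : ∀ x y : X, (y ≤ x ∨ x ≤ y) → p (f x) (f y) ≤ p x y - ψ (p x y))
    (u : X) (hu : f u = u) (w : X) (huw : u ≤ w ∨ w ≤ u) :
    Tendsto (fun n => p u (f^[n] w)) atTop (𝓝 0) :=
  iterates_approach_fixed_point_general p hp f hf ψ hψm hψpos hψ0 hcontr u hu w huw
end
end
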